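/- Let q be a complex number with |q| < 1. For every integer k ≥ 0, ∑_{i=0}^{k} (−1)^i q^{3i²−i} (1 − q^{8i+4}) / ( (1 − q⁴) (q⁸;q⁴)_{k+i} (q⁴;q⁴)_{k−i} ) = 1 / ( (−q²;q⁴)_k (q⁸;q⁸)_k ). (This is the paper's Lemma 2.5, which verifies the new Bailey pair (G1*), with q replaced by q⁴ to clear quarter-integer powers.) -/

import Mathlib

open Finset

/-- Finite q-Pochhammer symbol `(a;q)_n`. -/
noncomputable def qp (a q : ℂ) (n : ℕ) : ℂ := ∏ m ∈ Finset.range n, (1 - a * q ^ m)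

lemma qp_zero (a q : ℂ) : qp a q 0 = 1 := by simp [qp]

lemma qp_succ (a q : ℂ) (n : ℕ) : qp a q (n + 1) = qp a q n * (1 - a * q ^ n) := by
  simp [qp, Finset.prod_range_succ]

lemma one_sub_pow_ne (q : ℂ) (hq : ‖q‖ < 1) (n : ℕ) (hn : n ≠ 0) : 1 - q ^ n ≠ 0 := by
  intro h
  have h1 : q ^ n = 1 := by linear_combination -h
  have : ‖q ^ n‖ < 1 := by
    rw [norm_pow]
    exact pow_lt_one₀ (norm_nonneg q) hq hn
  rw [h1] at this; simp at this

lemma one_add_pow_ne (q : ℂ) (hq : ‖q‖ < 1) (n : ℕ) (hn : n ≠ 0) : 1 + q ^ n ≠ 0 := by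
  intro h
  have h1 : q ^ n = -1 := by linear_combination h
  have : ‖q ^ n‖ < 1 := by
    rw [norm_pow]
    exact pow_lt_one₀ (norm_nonneg q) hq hn
  rw [h1] at this; simp at this

lemma qp84_ne (q : ℂ) (hq : ‖q‖ < 1) (n : ℕ) : qp (q ^ 8) (q ^ 4) n ≠ 0 := by
  refine Finset.prod_ne_zero_iff.2 fun m _ => ?_
  have : q ^ 8 * (q ^ 4) ^ m = q ^ (8 + 4 * m) := by rw [← pow_mul, ← pow_add]
  rw [this]
  exact one_sub_pow_ne q hq _ (by omega)

lemma qp44_ne (q : ℂ) (hq : ‖q‖ < 1) (n : ℕ) : qp (q ^ 4) (q ^ 4) n ≠ 0 := by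
  refine Finset.prod_ne_zero_iff.2 fun m _ => ?_
  have : q ^ 4 * (q ^ 4) ^ m = q ^ (4 + 4 * m) := by rw [← pow_mul, ← pow_add]
  rw [this]
  exact one_sub_pow_ne q hq _ (by omega)

lemma qp88_ne (q : ℂ) (hq : ‖q‖ < 1) (n : ℕ) : qp (q ^ 8) (q ^ 8) n ≠ 0 := by
  refine Finset.prod_ne_zero_iff.2 fun m _ => ?_
  have : q ^ 8 * (q ^ 8) ^ m = q ^ (8 + 8 * m) := by rw [← pow_mul, ← pow_add]
  rw [this]
  exact one_sub_pow_ne q hq _ (by omega)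

lemma qpn4_ne (q : ℂ) (hq : ‖q‖ < 1) (n : ℕ) : qp (-q ^ 2) (q ^ 4) n ≠ 0 := by
  refine Finset.prod_ne_zero_iff.2 fun m _ => ?_
  have : (1 : ℂ) - -q ^ 2 * (q ^ 4) ^ m = 1 + q ^ (2 + 4 * m) := by
    rw [← pow_mul, pow_add]; ring
  rw [this]
  exact one_add_pow_ne q hq _ (by omega)

/-- WZ certificate function. -/
noncomputable def gg (q : ℂ) (k i : ℕ) : ℂ :=
  (-1 : ℂ) ^ i * q ^ (3 * i ^ 2 - i) *
    (- q ^ (4 * k + 2) + q ^ (4 * k + 2 * i + 2) - q ^ (4 * (k + 1 - i)) + q ^ (4 * k + 6 * i + 4)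
      - q ^ (6 * k + 4 + 2 * (k + 1 - i)) + q ^ (8 * k + 4 * i + 6) + q ^ (8 * k + 8)
      - q ^ (8 * k + 2 * i + 8)) /
    ((1 - q ^ 4) * qp (q ^ 8) (q ^ 4) (k + i) * qp (q ^ 4) (q ^ 4) (k + 1 - i))

theorem stmt11 (q : ℂ) (hq : ‖q‖ < 1) (k : ℕ) :
    ∑ i ∈ Finset.range (k + 1),
      (-1 : ℂ) ^ i * q ^ (3 * i ^ 2 - i) * (1 - q ^ (8 * i + 4)) /
        ((1 - q ^ 4) * qp (q ^ 8) (q ^ 4) (k + i) * qp (q ^ 4) (q ^ 4) (k - i))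
    = 1 / (qp (-q ^ 2) (q ^ 4) k * qp (q ^ 8) (q ^ 8) k) := by
  have h4 : (1 : ℂ) - q ^ 4 ≠ 0 := one_sub_pow_ne q hq 4 (by omega)
  induction k with
  | zero =>
    simp only [Finset.sum_range_one, qp]
    norm_num
    exact h4
  | succ k ih =>
    have hA := qp84_ne q hq
    have hB := qp44_ne q hq
    -- the recurrence factor
    set c : ℂ := (1 + q ^ (4 * k + 2)) * (1 - q ^ (8 * k + 8)) with hc
    have hc1 : (1 : ℂ) + q ^ (4 * k + 2) ≠ 0 := one_add_pow_ne q hq _ (by omega)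
    have hc2 : (1 : ℂ) - q ^ (8 * k + 8) ≠ 0 := one_sub_pow_ne q hq _ (by omega)
    have hcne : c ≠ 0 := mul_ne_zero hc1 hc2
    -- telescoping: per-term identity for i ≤ k
    have hterm : ∀ i ∈ Finset.range (k + 1),
        c * ((-1 : ℂ) ^ i * q ^ (3 * i ^ 2 - i) * (1 - q ^ (8 * i + 4)) /
          ((1 - q ^ 4) * qp (q ^ 8) (q ^ 4) (k + 1 + i) * qp (q ^ 4) (q ^ 4) (k + 1 - i)))
        - ((-1 : ℂ) ^ i * q ^ (3 * i ^ 2 - i) * (1 - q ^ (8 * i + 4)) /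
          ((1 - q ^ 4) * qp (q ^ 8) (q ^ 4) (k + i) * qp (q ^ 4) (q ^ 4) (k - i)))
        = gg q k (i + 1) - gg q k i := by
      intro i hi
      rw [Finset.mem_range] at hi
      obtain ⟨j, rfl⟩ : ∃ j, k = i + j := ⟨k - i, by omega⟩
      have e6 : 3 * (i + 1) ^ 2 - (i + 1) = (3 * i ^ 2 - i) + (6 * i + 2) := by
        have h2 : (i + 1) ^ 2 = i ^ 2 + 2 * i + 1 := by ring
        have h3 : i ≤ 3 * i ^ 2 := by nlinarith
        omega
      have e1 : i + j + 1 + i = (i + j + i) + 1 := by omega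
      have e2 : i + j + 1 - i = j + 1 := by omega
      have e3 : i + j - i = j := by omega
      have e4 : i + j + (i + 1) = (i + j + i) + 1 := by omega
      have e5 : i + j + 1 - (i + 1) = j := by omega
      unfold gg
      rw [e1, e2, e3, e4, e5, e6, qp_succ, qp_succ, pow_add]
      have f1 : (1 : ℂ) - q ^ 8 * (q ^ 4) ^ (i + j + i) ≠ 0 := by
        have h : q ^ 8 * (q ^ 4) ^ (i + j + i) = q ^ (8 + 4 * (i + j + i)) := by
          rw [← pow_mul, ← pow_add]
        rw [h]; exact one_sub_pow_ne q hq _ (by omega)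
      have f2 : (1 : ℂ) - q ^ 4 * (q ^ 4) ^ j ≠ 0 := by
        have h : q ^ 4 * (q ^ 4) ^ j = q ^ (4 + 4 * j) := by
          rw [← pow_mul, ← pow_add]
        rw [h]; exact one_sub_pow_ne q hq _ (by omega)
      have hA1 := hA (i + j + i)
      have hB1 := hB j
      field_simp
      ring
    have hg0 : gg q k 0 = 0 := by
      unfold gg
      rw [show 4 * (k + 1 - 0) = 4 * k + 4 by omega,
        show 6 * k + 4 + 2 * (k + 1 - 0) = 8 * k + 6 by omega]
      norm_num
    have hbnd : c * ((-1 : ℂ) ^ (k + 1) * q ^ (3 * (k + 1) ^ 2 - (k + 1)) *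
          (1 - q ^ (8 * (k + 1) + 4)) /
          ((1 - q ^ 4) * qp (q ^ 8) (q ^ 4) (k + 1 + (k + 1)) *
            qp (q ^ 4) (q ^ 4) (k + 1 - (k + 1))))
        + gg q k (k + 1) = 0 := by
      unfold gg
      rw [show k + 1 + (k + 1) = (k + (k + 1)) + 1 by omega, qp_succ,
        show k + 1 - (k + 1) = 0 by omega]
      have f1 : (1 : ℂ) - q ^ 8 * (q ^ 4) ^ (k + (k + 1)) ≠ 0 := by
        have h : q ^ 8 * (q ^ 4) ^ (k + (k + 1)) = q ^ (8 + 4 * (k + (k + 1))) := by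
          rw [← pow_mul, ← pow_add]
        rw [h]; exact one_sub_pow_ne q hq _ (by omega)
      have hA1 := hA (k + (k + 1))
      rw [qp_zero]
      field_simp
      ring
    have hrec : c * (∑ i ∈ Finset.range (k + 1 + 1),
        (-1 : ℂ) ^ i * q ^ (3 * i ^ 2 - i) * (1 - q ^ (8 * i + 4)) /
          ((1 - q ^ 4) * qp (q ^ 8) (q ^ 4) (k + 1 + i) * qp (q ^ 4) (q ^ 4) (k + 1 - i)))
        = ∑ i ∈ Finset.range (k + 1),
        (-1 : ℂ) ^ i * q ^ (3 * i ^ 2 - i) * (1 - q ^ (8 * i + 4)) /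
          ((1 - q ^ 4) * qp (q ^ 8) (q ^ 4) (k + i) * qp (q ^ 4) (q ^ 4) (k - i)) := by
      rw [Finset.mul_sum, Finset.sum_range_succ]
      have hsum : ∑ i ∈ Finset.range (k + 1),
          c * ((-1 : ℂ) ^ i * q ^ (3 * i ^ 2 - i) * (1 - q ^ (8 * i + 4)) /
            ((1 - q ^ 4) * qp (q ^ 8) (q ^ 4) (k + 1 + i) * qp (q ^ 4) (q ^ 4) (k + 1 - i)))
          = ∑ i ∈ Finset.range (k + 1),
          ((-1 : ℂ) ^ i * q ^ (3 * i ^ 2 - i) * (1 - q ^ (8 * i + 4)) /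
            ((1 - q ^ 4) * qp (q ^ 8) (q ^ 4) (k + i) * qp (q ^ 4) (q ^ 4) (k - i))
            + (gg q k (i + 1) - gg q k i)) := by
        refine Finset.sum_congr rfl fun i hi => ?_
        linear_combination hterm i hi
      rw [hsum, Finset.sum_add_distrib, Finset.sum_range_sub (gg q k), hg0]
      linear_combination hbnd
    have hC := qpn4_ne q hq k
    have hD := qp88_ne q hq k
    rw [ih] at hrec
    rw [qp_succ, qp_succ,
      show (1 : ℂ) - -q ^ 2 * (q ^ 4) ^ k = 1 + q ^ (4 * k + 2) by
        rw [← pow_mul, pow_add]; ring,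
      show (1 : ℂ) - q ^ 8 * (q ^ 8) ^ k = 1 - q ^ (8 * k + 8) by
        rw [← pow_mul, pow_add]; ring]
    rw [eq_div_iff (by
      refine mul_ne_zero (mul_ne_zero hC hc1) (mul_ne_zero hD hc2))]
    have h2 : (1 : ℂ) / (qp (-q ^ 2) (q ^ 4) k * qp (q ^ 8) (q ^ 8) k) *
        (qp (-q ^ 2) (q ^ 4) k * qp (q ^ 8) (q ^ 8) k) = 1 := by
      field_simp
    rw [hc] at hrec
    linear_combination (qp (-q ^ 2) (q ^ 4) k * qp (q ^ 8) (q ^ 8) k) * hrec + h2
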